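/- In the binary logit model with duration dependence, with history probabilities P_{y1,y2,y3,y4} defined by integrating over a probability measure μ on ℝ the conditional history probabilities (initial duration 1 when y1 = 1), and AME_{0→2} = ∫ (Λ(α+β2) − Λ(α)) dμ(α), the following identity holds: AME_{0→2} = ((e^{β2} − 1)/2)·(P_{0,0,1,0} + P_{0,1,0,0}) + ((e^{β2} − 1)/e^{β1})·P_{0,0,1,1} + ( (e^{β2}(1 − e^{β2}))/e^{β1} + e^{β2} − 1 )·P_{0,1,1,0} + ( e^{β1} − e^{β1}/e^{β2} )·(P_{1,0,1,0} + P_{1,0,1,1}) + ( (e^{β2} − 1)/e^{β1} − 1 + 1/e^{β2} )·P_{1,1,0,0}. (Proposition 5, identification of AME_{0→2}, equation (71).) -/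

import Mathlib

/-!
Condition on the fixed effect `α`. The conditional probabilities of the histories starting with `y₁ = 0`,
weighted as in the statement, add up to `Λ(α + β₂) − Λ(α)`, and so do the weighted conditional
probabilities of the histories starting with `y₁ = 1`: both are rational identities in `e^α`,
`e^{β₁}`, `e^{β₂}`. Hence the weighted sum equals `Λ(α + β₂) − Λ(α)` whatever the initial
distribution `p*(α)` is, and integrating against `μ` gives the formula; all integrands are
measurable with values in `[0, 1]`, so the integral splits term by term.
-/

open MeasureTheory

/-- The logistic function `Λ(u) = e^u / (1 + e^u)`. -/
noncomputable def logistic (u : ℝ) : ℝ := Real.exp u / (1 + Real.exp u)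

lemma logistic_eq_sigmoid (u : ℝ) : logistic u = Real.sigmoid u := by
  rw [logistic, Real.sigmoid_def, Real.exp_neg]
  field_simp
  ring

@[fun_prop]
def IsUnitValued {X : Type*} [MeasurableSpace X] (f : X → ℝ) : Prop :=
  Measurable f ∧ ∀ x, f x ∈ unitInterval

namespace IsUnitValued

variable {X : Type*} [MeasurableSpace X] {f g : X → ℝ}

@[fun_prop]
lemma mul (hf : IsUnitValued f) (hg : IsUnitValued g) : IsUnitValued (fun x => f x * g x) :=
  ⟨hf.1.mul hg.1, fun x => unitInterval.mul_mem (hf.2 x) (hg.2 x)⟩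

@[fun_prop]
lemma one_sub (hf : IsUnitValued f) : IsUnitValued (fun x => 1 - f x) :=
  ⟨measurable_const.sub hf.1, fun x => Set.Icc.mem_iff_one_sub_mem.mp (hf.2 x)⟩

@[fun_prop]
lemma logistic (hf : Measurable f) : IsUnitValued (fun x => logistic (f x)) := by
  simp only [logistic_eq_sigmoid]
  exact ⟨continuous_sigmoid.measurable.comp hf,
    fun x => ⟨Real.sigmoid_nonneg _, Real.sigmoid_le_one _⟩⟩

lemma integrable {μ : Measure X} [IsFiniteMeasure μ] (hf : IsUnitValued f) : Integrable f μ :=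
  .of_bound hf.1.aestronglyMeasurable 1 <| ae_of_all _ fun x => by
    rw [Real.norm_of_nonneg (hf.2 x).1]
    exact (hf.2 x).2

end IsUnitValued

section HistoryIdentities

open Real

variable (α β1 β2 : ℝ)

lemma logistic_add_sub_logistic_eq_of_initial_zero :
    logistic (α + β2) - logistic α
      = (exp β2 - 1) / 2
          * ((1 - logistic α) * logistic α * (1 - logistic (α + β1))
              + logistic α * (1 - logistic (α + β1)) * (1 - logistic α))
        + (exp β2 - 1) / exp β1 * ((1 - logistic α) * logistic α * logistic (α + β1))
        + (exp β2 * (1 - exp β2) / exp β1 + exp β2 - 1)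
          * (logistic α * logistic (α + β1) * (1 - logistic (α + β2))) := by
  simp only [logistic, exp_add]
  field_simp
  ring

lemma logistic_add_sub_logistic_eq_of_initial_one :
    logistic (α + β2) - logistic α
      = (exp β1 - exp β1 / exp β2)
          * ((1 - logistic (α + β1)) * logistic α * (1 - logistic (α + β1))
              + (1 - logistic (α + β1)) * logistic α * logistic (α + β1))
        + ((exp β2 - 1) / exp β1 - 1 + 1 / exp β2)
          * (logistic (α + β1) * (1 - logistic (α + β2)) * (1 - logistic α)) := by
  simp only [logistic, exp_add]
  field_simp
  ring

lemma logistic_add_sub_logistic_eq_of_initial_distribution (p : ℝ) :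
    logistic (α + β2) - logistic α
      = (exp β2 - 1) / 2
          * (p * (1 - logistic α) * logistic α * (1 - logistic (α + β1))
              + p * logistic α * (1 - logistic (α + β1)) * (1 - logistic α))
        + (exp β2 - 1) / exp β1 * (p * (1 - logistic α) * logistic α * logistic (α + β1))
        + (exp β2 * (1 - exp β2) / exp β1 + exp β2 - 1)
          * (p * logistic α * logistic (α + β1) * (1 - logistic (α + β2)))
        + (exp β1 - exp β1 / exp β2)
          * ((1 - p) * (1 - logistic (α + β1)) * logistic α * (1 - logistic (α + β1))
              + (1 - p) * (1 - logistic (α + β1)) * logistic α * logistic (α + β1))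
        + ((exp β2 - 1) / exp β1 - 1 + 1 / exp β2)
          * ((1 - p) * logistic (α + β1) * (1 - logistic (α + β2)) * (1 - logistic α)) := by
  linear_combination p * logistic_add_sub_logistic_eq_of_initial_zero α β1 β2
    + (1 - p) * logistic_add_sub_logistic_eq_of_initial_one α β1 β2

end HistoryIdentities

/-- Proposition 5, identification of `AME_{0→2}` (equation (71)): in the
binary logit model with duration dependence (probability of choosing 1 is
`Λ(α)` after lagged choice 0 and `Λ(α + β(d))` after lagged choice 1 with
duration `d`; `β₁ = β(1)`, `β₂ = β(2)`; initial duration 1 when `y₁ = 1`),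
`AME_{0→2} = ∫ (Λ(α+β₂) − Λ(α)) dμ(α)` equals the stated weighted sum of
the four-period history probabilities, with `p*(α)` the probability of the
initial condition `y₁ = 0`. -/
theorem prop5_AME_0_to_2 (β1 β2 : ℝ) (μ : Measure ℝ) [IsProbabilityMeasure μ]
    (pstar : ℝ → ℝ) (hmeas : Measurable pstar)
    (h0 : ∀ α, 0 ≤ pstar α) (h1 : ∀ α, pstar α ≤ 1) :
    (∫ α, (logistic (α + β2) - logistic α) ∂μ)
      = ((Real.exp β2 - 1) / 2)
          * ((∫ α, pstar α * (1 - logistic α) * logistic α * (1 - logistic (α + β1)) ∂μ)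
              + ∫ α, pstar α * logistic α * (1 - logistic (α + β1)) * (1 - logistic α) ∂μ)
        + ((Real.exp β2 - 1) / Real.exp β1)
          * (∫ α, pstar α * (1 - logistic α) * logistic α * logistic (α + β1) ∂μ)
        + ((Real.exp β2 * (1 - Real.exp β2)) / Real.exp β1 + Real.exp β2 - 1)
          * (∫ α, pstar α * logistic α * logistic (α + β1) * (1 - logistic (α + β2)) ∂μ)
        + (Real.exp β1 - Real.exp β1 / Real.exp β2)
          * ((∫ α, (1 - pstar α) * (1 - logistic (α + β1)) * logistic α * (1 - logistic (α + β1)) ∂μ)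
              + ∫ α, (1 - pstar α) * (1 - logistic (α + β1)) * logistic α * logistic (α + β1) ∂μ)
        + ((Real.exp β2 - 1) / Real.exp β1 - 1 + 1 / Real.exp β2)
          * (∫ α, (1 - pstar α) * logistic (α + β1) * (1 - logistic (α + β2)) * (1 - logistic α) ∂μ) := by
  have hp : IsUnitValued pstar := ⟨hmeas, fun α => ⟨h0 α, h1 α⟩⟩
  rw [integral_congr_ae <| ae_of_all μ fun α =>
    logistic_add_sub_logistic_eq_of_initial_distribution α β1 β2 (pstar α)]
  simp (disch := (repeat' first | apply Integrable.fun_add | apply Integrable.const_mul) <;>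
      exact IsUnitValued.integrable (by fun_prop))
    only [integral_add, integral_const_mul]
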